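/- Let k(t) = s₀e^{2ib|t|} with s₀ = iκ/(2cosφ), b = κcosφ, d = 2πδ. For U₀(z) = ã e^{−ibz} and weight η⁽⁰⁾(z) = T e^{iqz} with q ≠ −b and q ≠ 3b, the integral ∫_{−d}^{d} k(z − z₀) η⁽⁰⁾(z₀) U₀(z₀) dz₀ equals H₁e^{−2ibz} + H₂e^{2ibz} + H₃e^{i(q−b)z}, where H_j = H₀·H̃_j with H₀ = −iTã s₀ / ((b+q)(3b−q)), H̃₁ = (3b−q)e^{id(b+q)}, H̃₂ = (b+q)e^{id(3b−q)}, H̃₃ = −4b. -/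

import Mathlib

/-!
The integrand is `s₀ T ã · e^{2ib|z - z₀|} e^{i(q-b)z₀}`. Split the interval at `z`, where
`|z - z₀|` changes sign: on each half the integrand is a single exponential in `z₀`, with
frequency `i(q - 3b)` resp. `i(q + b)`, nonzero exactly because `q ≠ 3b` and `q ≠ -b`.
The two boundary terms at `z₀ = z` combine into the `e^{i(q-b)z}` term, and the endpoints
`∓d` give the `e^{±2ibz}` terms.
-/

open Complex

lemma integral_exp_add_mul {c : ℂ} (hc : c ≠ 0) (e : ℂ) (a b : ℝ) :
    ∫ x in a..b, exp (e + c * x) = (exp (e + c * b) - exp (e + c * a)) / c := by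
  simp only [exp_add, intervalIntegral.integral_const_mul, integral_exp_mul_complex hc]
  ring

lemma integral_exp_mul_abs_sub_mul_exp {a b z : ℝ} (hz : z ∈ Set.Icc a b) {β γ : ℂ}
    (hsub : γ - β ≠ 0) (hadd : γ + β ≠ 0) :
    ∫ x in a..b, exp (β * |z - x|) * exp (γ * x) =
      exp (γ * z) * (2 * β / ((γ - β) * (γ + β)))
        - exp (β * z + (γ - β) * a) / (γ - β) + exp (-β * z + (γ + β) * b) / (γ + β) := by
  obtain ⟨haz, hzb⟩ := hz
  have hcont : ∀ u v : ℝ, IntervalIntegrable (fun x : ℝ => exp (β * |z - x|) * exp (γ * x))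
      MeasureTheory.volume u v := fun u v => by
    apply Continuous.intervalIntegrable
    fun_prop
  have left : ∫ x in a..z, exp (β * |z - x|) * exp (γ * x)
      = ∫ x in a..z, exp (β * z + (γ - β) * x) := by
    refine intervalIntegral.integral_congr fun x hx => ?_
    rw [Set.uIcc_of_le haz] at hx
    simp only [abs_of_nonneg (sub_nonneg.2 hx.2), ← exp_add]
    push_cast
    ring_nf
  have right : ∫ x in z..b, exp (β * |z - x|) * exp (γ * x)
      = ∫ x in z..b, exp (-β * z + (γ + β) * x) := by
    refine intervalIntegral.integral_congr fun x hx => ?_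
    rw [Set.uIcc_of_le hzb] at hx
    simp only [abs_of_nonpos (sub_nonpos.2 hx.1), ← exp_add]
    push_cast
    ring_nf
  have hmid₁ : exp (β * z + (γ - β) * z) = exp (γ * z) := by ring_nf
  have hmid₂ : exp (-β * z + (γ + β) * z) = exp (γ * z) := by ring_nf
  rw [← intervalIntegral.integral_add_adjacent_intervals (hcont a z) (hcont z b), left, right,
    integral_exp_add_mul hsub, integral_exp_add_mul hadd, hmid₁, hmid₂]
  field_simp
  ring

theorem stmt_12 (b d : ℝ) (s₀ : ℂ) (atil T : ℂ) (q : ℝ) (hq1 : q ≠ -b) (hq2 : q ≠ 3 * b)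
    (z : ℝ) (hz : z ∈ Set.Icc (-d) d) :
    (∫ z₀ in (-d)..d,
        s₀ * Complex.exp (2 * Complex.I * b * |z - z₀|) *
          (T * Complex.exp (Complex.I * q * z₀)) *
          (atil * Complex.exp (-Complex.I * b * z₀))) =
      (-(Complex.I * T * atil * s₀) / (((b : ℂ) + q) * (3 * b - q))) *
          ((3 * (b : ℂ) - q) * Complex.exp (Complex.I * d * (b + q))) *
          Complex.exp (-2 * Complex.I * b * z)
        + (-(Complex.I * T * atil * s₀) / (((b : ℂ) + q) * (3 * b - q))) *
            (((b : ℂ) + q) * Complex.exp (Complex.I * d * (3 * b - q))) *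
            Complex.exp (2 * Complex.I * b * z)
        + (-(Complex.I * T * atil * s₀) / (((b : ℂ) + q) * (3 * b - q))) * (-4 * b) *
            Complex.exp (Complex.I * (q - b) * z) := by
  have hadd : (b : ℂ) + q ≠ 0 := by exact_mod_cast fun h => hq1 (by linarith)
  have hsub : 3 * (b : ℂ) - q ≠ 0 := by exact_mod_cast fun h => hq2 (by linarith)
  have hγβ : I * (q - b) - 2 * I * b = -I * (3 * b - q) := by ring
  have hγβ' : I * (q - b) + 2 * I * b = I * (b + q) := by ring
  have hfactor : ∀ z₀ : ℝ, s₀ * exp (2 * I * b * |z - z₀|) * (T * exp (I * q * z₀)) *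
      (atil * exp (-I * b * z₀)) =
      s₀ * T * atil * (exp (2 * I * b * |z - z₀|) * exp (I * (q - b) * z₀)) := fun z₀ => by
    rw [show I * (q - b) * z₀ = I * q * z₀ + -I * b * z₀ by ring, exp_add]
    ring
  have hright : exp (-(2 * I * b) * z + (I * (q - b) + 2 * I * b) * d) =
      exp (I * d * (b + q)) * exp (-2 * I * b * z) := by
    rw [← exp_add]; ring_nf
  have hleft : exp (2 * I * b * z + (I * (q - b) - 2 * I * b) * ((-d : ℝ) : ℂ)) =
      exp (I * d * (3 * b - q)) * exp (2 * I * b * z) := by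
    rw [← exp_add]; push_cast; ring_nf
  simp only [hfactor, intervalIntegral.integral_const_mul]
  rw [integral_exp_mul_abs_sub_mul_exp hz (hγβ ▸ mul_ne_zero (neg_ne_zero.2 I_ne_zero) hsub)
    (hγβ' ▸ mul_ne_zero I_ne_zero hadd), hright, hleft, hγβ, hγβ']
  have hsub' : (b : ℂ) * 3 - q ≠ 0 := by rwa [mul_comm]
  field_simp
  simp only [I_sq]
  ring
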